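/- Let G be an r-SPTG in which all non-final locations are urgent, and fix ν ∈ [0,r]. For every location ℓ such that Val_G(ℓ,ν) < +∞, the (|L|−1)-step bounded value satisfies V^{|L|−1}_ν(ℓ) ≤ (|L|−1)·w_T + w_F, where |L| is the number of locations, w_T the maximal absolute value of a transition weight, and w_F = max over final ℓ′ of max(|φ_{ℓ′}(0)|, |φ_{ℓ′}(r)|). -/

import Mathlib

/-!
Formalization of (simple) priced timed games (SPTGs) following
"One-Clock Priced Timed Games with Negative Weights"
(Brihaye, Geeraerts, Haddad, Lefaucheux, Monmege).
-/

noncomputable section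
open scoped Classical

/-- `f` decomposes, on `[a,b]`, into `n` affine pieces with rational slopes and
rational interior cutpoints.  (This entails in particular that `f` is finite and
continuous on `[a,b]`.) -/
def AffinePiecesOn (f : ℝ → EReal) (a b : ℝ) (n : ℕ) : Prop :=
  ∃ c : ℕ → ℝ, c 0 = a ∧ c n = b ∧ (∀ i < n, c i < c (i + 1)) ∧
    (∀ i, 0 < i → i < n → ∃ q : ℚ, c i = (q : ℝ)) ∧
    (∀ i < n, ∃ (m : ℚ) (q : ℝ), ∀ x : ℝ, c i ≤ x → x ≤ c (i + 1) →
      f x = (((m : ℝ) * x + q : ℝ) : EReal))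

/-- A cost function over `[a,b]`: either constantly `+∞`, or constantly `-∞`, or
continuous and piecewise affine with rational slopes and finitely many rational
cutpoints. -/
def CostFunctionOn (f : ℝ → EReal) (a b : ℝ) : Prop :=
  (∀ x : ℝ, a ≤ x → x ≤ b → f x = ⊤) ∨ (∀ x : ℝ, a ≤ x → x ≤ b → f x = ⊥) ∨
    ∃ n : ℕ, AffinePiecesOn f a b n

/-- `x` and `y` lie in the same interval (open interval or singleton) of the
partition of the line induced by the finite set of points `P`. -/
def sameInt (P : Finset ℚ) (x y : ℝ) : Prop :=
  ∀ p ∈ P, (((p : ℝ) < x) ↔ ((p : ℝ) < y)) ∧ ((x < (p : ℝ)) ↔ (y < (p : ℝ)))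

/-- An `r`-SPTG (simple priced timed game). Locations are partitioned into those of
player Min, player Max and the final ones; some non-final locations are urgent;
transitions carry integer weights, non-final locations carry integer rates, final
locations carry affine final cost functions.  The clock stays in `[0,r]`. -/
structure SPTG where
  Loc : Type
  [fintypeLoc : Fintype Loc]
  [decEqLoc : DecidableEq Loc]
  isMin : Loc → Prop
  isMax : Loc → Prop
  isFin : Loc → Prop
  partition : ∀ ℓ, (isMin ℓ ∧ ¬isMax ℓ ∧ ¬isFin ℓ) ∨ (¬isMin ℓ ∧ isMax ℓ ∧ ¬isFin ℓ) ∨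
    (¬isMin ℓ ∧ ¬isMax ℓ ∧ isFin ℓ)
  isUrg : Loc → Prop
  urg_not_fin : ∀ ℓ, isUrg ℓ → ¬isFin ℓ
  trans : Loc → Loc → Prop
  trans_not_fin : ∀ ℓ ℓ', trans ℓ ℓ' → ¬isFin ℓ
  r : ℝ
  r_nonneg : 0 ≤ r
  r_le_one : r ≤ 1
  finSlope : Loc → ℝ
  finIntercept : Loc → ℝ
  locWt : Loc → ℤ
  transWt : Loc → Loc → ℤ

attribute [instance] SPTG.fintypeLoc SPTG.decEqLoc

namespace SPTG

/-- The final cost functions have rational coefficients (this is part of the paper's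
definition of an SPTG). -/
def ratFinal (G : SPTG) : Prop :=
  ∀ ℓ : G.Loc, (∃ a : ℚ, G.finSlope ℓ = (a : ℝ)) ∧ ∃ b : ℚ, G.finIntercept ℓ = (b : ℝ)

/-- The final cost function `φ_ℓ`. -/
def finalCost (G : SPTG) (ℓ : G.Loc) (ν : ℝ) : ℝ := G.finSlope ℓ * ν + G.finIntercept ℓ

/-- A configuration: a location together with a clock value. -/
abbrev Conf (G : SPTG) := G.Loc × ℝ

def validConf (G : SPTG) (s : G.Conf) : Prop := 0 ≤ s.2 ∧ s.2 ≤ G.r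

/-- A move: a delay `t` together with a transition (determined by its target). -/
structure Move (G : SPTG) where
  t : ℝ
  tgt : G.Loc

/-- The move `m` is available from configuration `s`. -/
def canMove (G : SPTG) (s : G.Conf) (m : G.Move) : Prop :=
  0 ≤ m.t ∧ s.2 + m.t ≤ G.r ∧ G.trans s.1 m.tgt ∧ (G.isUrg s.1 → m.t = 0)

/-- Cost `π(δ) + t·π(ℓ)` of a move. -/
def moveCost (G : SPTG) (s : G.Conf) (m : G.Move) : ℝ :=
  (G.transWt s.1 m.tgt : ℝ) + m.t * (G.locWt s.1 : ℝ)

def applyMove (G : SPTG) (s : G.Conf) (m : G.Move) : G.Conf := (m.tgt, s.2 + m.t)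

def deadlock (G : SPTG) (s : G.Conf) : Prop := ¬∃ m : G.Move, G.canMove s m

/-- A finite play is represented by its initial configuration together with the
list of successive moves; `ValidFrom s l` states that all these moves are legal. -/
def ValidFrom (G : SPTG) : G.Conf → List G.Move → Prop
  | _, [] => True
  | s, m :: l => G.canMove s m ∧ ValidFrom G (G.applyMove s m) l

/-- Last configuration of a finite play. -/
def endConf (G : SPTG) (s : G.Conf) (l : List G.Move) : G.Conf := l.foldl G.applyMove s

/-- Sum of the weights of the discrete transitions taken along a finite play. -/
def transWtSum (G : SPTG) : G.Conf → List G.Move → ℤ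
  | _, [] => 0
  | s, m :: l => G.transWt s.1 m.tgt + transWtSum G (G.applyMove s m) l

/-- Price of a finite play: the accumulated costs of its moves, plus the final cost
function evaluated at the last configuration if its location is final. -/
def finPrice (G : SPTG) : G.Conf → List G.Move → ℝ
  | s, [] => if G.isFin s.1 then G.finalCost s.1 s.2 else 0
  | s, m :: l => G.moveCost s m + finPrice G (G.applyMove s m) l

/-- A strategy of Min: it prescribes a legal move to every finite play ending in a
non-deadlock configuration owned by Min. -/
structure MinStrategy (G : SPTG) where
  move : G.Conf → List G.Move → Option G.Move
  legal : ∀ s l, G.validConf s → G.ValidFrom s l → G.isMin (G.endConf s l).1 →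
    ¬G.deadlock (G.endConf s l) → ∃ m, move s l = some m ∧ G.canMove (G.endConf s l) m

/-- A strategy of Max. -/
structure MaxStrategy (G : SPTG) where
  move : G.Conf → List G.Move → Option G.Move
  legal : ∀ s l, G.validConf s → G.ValidFrom s l → G.isMax (G.endConf s l).1 →
    ¬G.deadlock (G.endConf s l) → ∃ m, move s l = some m ∧ G.canMove (G.endConf s l) m

/-- One step of the play induced by a pair of strategies. -/
def step (G : SPTG) (σmin : MinStrategy G) (σmax : MaxStrategy G) (s : G.Conf)
    (l : List G.Move) : List G.Move :=
  if G.deadlock (G.endConf s l) then l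
  else if G.isMin (G.endConf s l).1 then
    match σmin.move s l with
    | some m => l ++ [m]
    | none => l
  else
    match σmax.move s l with
    | some m => l ++ [m]
    | none => l

/-- The successive finite prefixes of the unique play determined by an initial
configuration and a pair of strategies. -/
def hist (G : SPTG) (σmin : MinStrategy G) (σmax : MaxStrategy G) (s : G.Conf) :
    ℕ → List G.Move
  | 0 => []
  | n + 1 => G.step σmin σmax s (hist G σmin σmax s n)

/-- Price of the completed play determined by an initial configuration and a pair of
strategies: the price of the play if it reaches a final location, `+∞` otherwise. -/
def playCost (G : SPTG) (s : G.Conf) (σmin : MinStrategy G) (σmax : MaxStrategy G) :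
    EReal :=
  if h : ∃ n, G.isFin (G.endConf s (G.hist σmin σmax s n)).1 then
    ((G.finPrice s (G.hist σmin σmax s (Nat.find h)) : ℝ) : EReal)
  else ⊤

/-- Upper value. -/
def upperVal (G : SPTG) (s : G.Conf) : EReal :=
  ⨅ σmin : MinStrategy G, ⨆ σmax : MaxStrategy G, G.playCost s σmin σmax

/-- Lower value. -/
def lowerVal (G : SPTG) (s : G.Conf) : EReal :=
  ⨆ σmax : MaxStrategy G, ⨅ σmin : MinStrategy G, G.playCost s σmin σmax

/-- The value of the game (SPTGs are determined). -/
def val (G : SPTG) (ℓ : G.Loc) (ν : ℝ) : EReal := G.upperVal (ℓ, ν)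

/-- The finite play `(s, l)` is consistent with the Min strategy `σ`. -/
def consistentMin (G : SPTG) (σ : MinStrategy G) (s : G.Conf) (l : List G.Move) : Prop :=
  ∀ (l₁ : List G.Move) (m : G.Move) (l₂ : List G.Move), l = l₁ ++ m :: l₂ →
    G.isMin (G.endConf s l₁).1 → σ.move s l₁ = some m

/-- The finite play `(s, l)` is consistent with the Max strategy `σ`. -/
def consistentMax (G : SPTG) (σ : MaxStrategy G) (s : G.Conf) (l : List G.Move) : Prop :=
  ∀ (l₁ : List G.Move) (m : G.Move) (l₂ : List G.Move), l = l₁ ++ m :: l₂ →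
    G.isMax (G.endConf s l₁).1 → σ.move s l₁ = some m

/-- There is an infinite play from `s` consistent with the Min strategy `σ`. -/
def infConsMin (G : SPTG) (σ : MinStrategy G) (s : G.Conf) : Prop :=
  ∃ ρ : ℕ → G.Move, ∀ n : ℕ,
    G.ValidFrom s (List.ofFn fun i : Fin n => ρ i) ∧
    G.consistentMin σ s (List.ofFn fun i : Fin n => ρ i)

/-- `Cost(s, σ_Min)`: the supremum of the prices of the completed plays from `s`
consistent with `σ_Min` (finite completed plays end in a deadlock; they have price
`+∞` unless they end in a final location; infinite plays have price `+∞`). -/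
def minCost (G : SPTG) (σ : MinStrategy G) (s : G.Conf) : EReal :=
  (⨆ l : { l : List G.Move //
      G.ValidFrom s l ∧ G.consistentMin σ s l ∧ G.deadlock (G.endConf s l) },
    if G.isFin (G.endConf s l.1).1 then ((G.finPrice s l.1 : ℝ) : EReal) else ⊤) ⊔
  (if G.infConsMin σ s then (⊤ : EReal) else ⊥)

/-- `Cost(s, σ_Max)`: the infimum of the prices of the completed plays from `s`
consistent with `σ_Max`. -/
def maxCost (G : SPTG) (σ : MaxStrategy G) (s : G.Conf) : EReal :=
  ⨅ l : { l : List G.Move //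
      G.ValidFrom s l ∧ G.consistentMax σ s l ∧ G.deadlock (G.endConf s l) },
    if G.isFin (G.endConf s l.1).1 then ((G.finPrice s l.1 : ℝ) : EReal) else ⊤

/-- A finite positional (FP-)strategy: a memoryless strategy given by a function `f`
of the current configuration, together with, for each location, finitely many
rational endpoints `0 = ν_0 < ν_1 < ⋯ < ν_k = r` (all belonging to `pts`) such that
on each open interval and at each endpoint the strategy plays the same move, which is
either a fixed transition taken immediately or waiting until the next endpoint and
then taking a fixed transition. -/
structure FPStrategy (G : SPTG) where
  f : G.Conf → Option G.Move
  pts : Finset ℚ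
  zero_mem : (0 : ℚ) ∈ pts
  r_mem : ∃ q ∈ pts, (q : ℝ) = G.r
  pts_range : ∀ q ∈ pts, (0 : ℝ) ≤ (q : ℝ) ∧ (q : ℝ) ≤ G.r
  fp : ∀ ℓ : G.Loc, ∃ (k : ℕ) (ν : ℕ → ℚ) (δ : ℕ → G.Loc),
    (∀ i ≤ k, ν i ∈ pts) ∧ ν 0 = 0 ∧ ((ν k : ℝ) = G.r) ∧ (∀ i < k, ν i < ν (i + 1)) ∧
    (∀ i, 1 ≤ i → i ≤ k →
      (∀ x : ℝ, (ν (i - 1) : ℝ) < x → x < (ν i : ℝ) →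
        f (ℓ, x) = some ⟨0, δ (2 * i - 1)⟩) ∨
      (∀ x : ℝ, (ν (i - 1) : ℝ) < x → x < (ν i : ℝ) →
        f (ℓ, x) = some ⟨(ν i : ℝ) - x, δ (2 * i - 1)⟩)) ∧
    (∀ i < k, f (ℓ, (ν i : ℝ)) = some ⟨0, δ (2 * i)⟩ ∨
      f (ℓ, (ν i : ℝ)) = some ⟨(ν (i + 1) : ℝ) - (ν i : ℝ), δ (2 * i)⟩) ∧
    f (ℓ, (ν k : ℝ)) = some ⟨0, δ (2 * k)⟩

namespace FPStrategy

variable {G : SPTG}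

/-- `|σ| = |Int(σ)|`: the number of intervals (singletons and open intervals)
generated by the points of `σ`. -/
def size (σ : FPStrategy G) : ℕ := 2 * σ.pts.card - 1

/-- `σ` prescribes a legal move wherever Min has to play. -/
def legalMin (σ : FPStrategy G) : Prop :=
  ∀ s : G.Conf, G.validConf s → G.isMin s.1 → ¬G.deadlock s →
    ∃ m, σ.f s = some m ∧ G.canMove s m

/-- `σ` prescribes a legal move wherever Max has to play. -/
def legalMax (σ : FPStrategy G) : Prop :=
  ∀ s : G.Conf, G.validConf s → G.isMax s.1 → ¬G.deadlock s →
    ∃ m, σ.f s = some m ∧ G.canMove s m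

/-- The finite play `(s, l)` is consistent with `σ` viewed as a Min strategy. -/
def consMin (σ : FPStrategy G) (s : G.Conf) (l : List G.Move) : Prop :=
  ∀ (l₁ : List G.Move) (m : G.Move) (l₂ : List G.Move), l = l₁ ++ m :: l₂ →
    G.isMin (G.endConf s l₁).1 → σ.f (G.endConf s l₁) = some m

/-- The finite play `(s, l)` is consistent with `σ` viewed as a Max strategy. -/
def consMax (σ : FPStrategy G) (s : G.Conf) (l : List G.Move) : Prop :=
  ∀ (l₁ : List G.Move) (m : G.Move) (l₂ : List G.Move), l = l₁ ++ m :: l₂ →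
    G.isMax (G.endConf s l₁).1 → σ.f (G.endConf s l₁) = some m

/-- An NC-strategy of Min: an FP-strategy such that along every cycle consistent
with it whose endpoints have clock values in the same interval of `Int(σ)`, the sum
of the weights of the discrete transitions is at most `-1`. -/
def isNC (σ : FPStrategy G) : Prop :=
  σ.legalMin ∧
  ∀ (ℓ : G.Loc) (ν : ℝ) (l : List G.Move), l ≠ [] →
    G.ValidFrom (ℓ, ν) l → σ.consMin (ℓ, ν) l → (G.endConf (ℓ, ν) l).1 = ℓ →
    sameInt σ.pts ν (G.endConf (ℓ, ν) l).2 → G.transWtSum (ℓ, ν) l ≤ -1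

/-- The fake value of `σ` from `s`: the supremum of the prices of the plays from `s`
consistent with `σ` that reach a final location (`sup ∅ = -∞`). -/
def fakeVal (σ : FPStrategy G) (s : G.Conf) : EReal :=
  ⨆ l : { l : List G.Move //
      G.ValidFrom s l ∧ σ.consMin s l ∧ G.isFin (G.endConf s l).1 },
    ((G.finPrice s l.1 : ℝ) : EReal)

/-- `Cost(s, σ)` for `σ` viewed as a Max strategy. -/
def maxCost (σ : FPStrategy G) (s : G.Conf) : EReal :=
  ⨅ l : { l : List G.Move //
      G.ValidFrom s l ∧ σ.consMax s l ∧ G.deadlock (G.endConf s l) },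
    if G.isFin (G.endConf s l.1).1 then ((G.finPrice s l.1 : ℝ) : EReal) else ⊤

end FPStrategy

/-- `w_T`: the largest absolute value of a transition weight. -/
def wT (G : SPTG) : ℝ :=
  ⨆ p : G.Loc × G.Loc, if G.trans p.1 p.2 then |(G.transWt p.1 p.2 : ℝ)| else 0

/-- `w_L`: the largest absolute value of a (non-final) location weight. -/
def wL (G : SPTG) : ℝ :=
  ⨆ ℓ : G.Loc, if G.isFin ℓ then 0 else |(G.locWt ℓ : ℝ)|

/-- `w_F`: the largest absolute value of a final cost function on `[0,r]`. -/
def wF (G : SPTG) : ℝ :=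
  ⨆ ℓ : G.Loc, if G.isFin ℓ then max |G.finalCost ℓ 0| |G.finalCost ℓ G.r| else 0

/-- Slope of the value function of location `ℓ` between clock values `ν₁` and `ν₂`. -/
def slope (G : SPTG) (ℓ : G.Loc) (ν₁ ν₂ : ℝ) : ℝ :=
  ((G.val ℓ ν₂).toReal - (G.val ℓ ν₁).toReal) / (ν₂ - ν₁)

/-- A game is finitely optimal if Min has a fake-optimal NC-strategy, Max has an
optimal FP-strategy, and all value functions are cost functions. -/
def finitelyOptimal (G : SPTG) : Prop :=
  (∃ σ : FPStrategy G, σ.isNC ∧ ∀ s : G.Conf, G.validConf s → σ.fakeVal s = G.val s.1 s.2) ∧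
  (∃ σ : FPStrategy G, σ.legalMax ∧ ∀ s : G.Conf, G.validConf s → σ.maxCost s = G.val s.1 s.2) ∧
  ∀ ℓ : G.Loc, CostFunctionOn (G.val ℓ) 0 G.r

end SPTG

namespace SPTG

/-- The operator `F` of the value-iteration scheme (for a fixed clock value `ν`). -/
def oper (G : SPTG) (ν : ℝ) (x : G.Loc → EReal) (ℓ : G.Loc) : EReal :=
  if G.isFin ℓ then ((G.finalCost ℓ ν : ℝ) : EReal)
  else if G.isMax ℓ then
    ⨆ ℓ' : { ℓ' : G.Loc // G.trans ℓ ℓ' }, (((G.transWt ℓ ℓ'.1 : ℝ) : EReal) + x ℓ'.1)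
  else
    ⨅ ℓ' : { ℓ' : G.Loc // G.trans ℓ ℓ' }, (((G.transWt ℓ ℓ'.1 : ℝ) : EReal) + x ℓ'.1)

/-- The sequence `x⁽⁰⁾, x⁽¹⁾, …`: `x⁽⁰⁾_ℓ = +∞` for non-final `ℓ`,
`x⁽⁰⁾_ℓ = φ_ℓ(ν)` for final `ℓ`, and `x⁽ⁱ⁾ = F(x⁽ⁱ⁻¹⁾)`. -/
def iterSeq (G : SPTG) (ν : ℝ) : ℕ → G.Loc → EReal
  | 0 => fun ℓ => if G.isFin ℓ then ((G.finalCost ℓ ν : ℝ) : EReal) else ⊤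
  | i + 1 => G.oper ν (iterSeq G ν i)

/-- `Cost^i` of the completed play determined by a pair of strategies: its price if
it reaches a final location within `i` steps, and `+∞` otherwise. -/
def playCostBdd (G : SPTG) (i : ℕ) (s : G.Conf) (σmin : MinStrategy G)
    (σmax : MaxStrategy G) : EReal :=
  if h : ∃ k, k ≤ i ∧ G.isFin (G.endConf s (G.hist σmin σmax s k)).1 then
    ((G.finPrice s (G.hist σmin σmax s (Nat.find h)) : ℝ) : EReal)
  else ⊤

/-- The `i`-step bounded value `V^i_ν(ℓ)`. -/
def boundedVal (G : SPTG) (i : ℕ) (ν : ℝ) (ℓ : G.Loc) : EReal :=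
  ⨅ σmin : MinStrategy G, ⨆ σmax : MaxStrategy G, G.playCostBdd i (ℓ, ν) σmin σmax

end SPTG

/-!
A location from which Min cannot force the play into a final location (one outside the
attractor of the final locations) has value `+∞`: Max simply keeps the play outside the
attractor. Inside the attractor, Min moves positionally to a successor of smaller attractor
rank, and Max cannot help decreasing the rank either, so a final location is reached within
`rank ≤ |L| - 1` steps: the attractor levels grow strictly until they stabilise. As all
locations are urgent, no time elapses, so each of these transitions costs at most `w_T` and
the final cost is at most `w_F`.
-/

theorem Set.iterate_subset_iterate_natCard_sub_one {α : Type*} [Finite α]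
    {f : Set α → Set α} (hf : ∀ t, t ⊆ f t) {s : Set α} (hs : s.Nonempty) (m : ℕ) :
    f^[m] s ⊆ f^[Nat.card α - 1] s := by
  have hmono : Monotone (f^[·] s) := monotone_nat_of_le_succ fun n => by
    rw [Function.iterate_succ_apply']
    exact hf _
  by_cases hstab : ∃ k < Nat.card α - 1, f (f^[k] s) = f^[k] s
  · obtain ⟨k, hk, hfix⟩ := hstab
    have hconst : ∀ j, f^[j + k] s = f^[k] s := fun j => by
      rw [Function.iterate_add_apply]
      exact Function.IsFixedPt.iterate hfix j
    calc f^[m] s ⊆ f^[m + k] s := hmono (Nat.le_add_right m k)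
      _ = f^[Nat.card α - 1] s := by
        rw [hconst, ← hconst (Nat.card α - 1 - k), Nat.sub_add_cancel hk.le]
  · push Not at hstab
    have hgrow : ∀ k ≤ Nat.card α - 1, k + 1 ≤ (f^[k] s).ncard := by
      intro k hk
      induction k with
      | zero => exact (Set.ncard_pos s.toFinite).2 hs
      | succ k ih =>
        have hlt : (f^[k] s).ncard < (f^[k + 1] s).ncard := by
          rw [Function.iterate_succ_apply']
          exact Set.ncard_lt_ncard ((hf _).ssubset_of_ne (hstab k (by omega)).symm)
        have := ih (by omega)
        omega
    have huniv : f^[Nat.card α - 1] s = Set.univ := by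
      refine Set.eq_of_subset_of_ncard_le (Set.subset_univ _) ?_
      have := hgrow _ le_rfl
      rw [Set.ncard_univ]
      omega
    exact huniv ▸ Set.subset_univ _

namespace SPTG

variable {G : SPTG}

lemma not_isFin_of_isMin {ℓ : G.Loc} (h : G.isMin ℓ) : ¬G.isFin ℓ := by
  rcases G.partition ℓ with h' | h' | h' <;> tauto

lemma not_isMax_of_isMin {ℓ : G.Loc} (h : G.isMin ℓ) : ¬G.isMax ℓ := by
  rcases G.partition ℓ with h' | h' | h' <;> tauto

lemma isMin_or_isMax_of_not_isFin {ℓ : G.Loc} (h : ¬G.isFin ℓ) : G.isMin ℓ ∨ G.isMax ℓ := by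
  rcases G.partition ℓ with h' | h' | h' <;> tauto

section Attractor

variable (G)

def attrStep (S : Set G.Loc) : Set G.Loc :=
  S ∪ {ℓ | G.isMin ℓ ∧ ∃ ℓ', G.trans ℓ ℓ' ∧ ℓ' ∈ S}
    ∪ {ℓ | G.isMax ℓ ∧ (∃ ℓ', G.trans ℓ ℓ') ∧ ∀ ℓ', G.trans ℓ ℓ' → ℓ' ∈ S}

/-- The locations from which Min can force a final location within `n` transitions. -/
def attrLevel (n : ℕ) : Set G.Loc := G.attrStep^[n] {ℓ | G.isFin ℓ}

def attractor : Set G.Loc := ⋃ n, G.attrLevel n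

def attrRank (ℓ : G.Loc) : ℕ := sInf {n | ℓ ∈ G.attrLevel n}

variable {G}

lemma subset_attrStep (S : Set G.Loc) : S ⊆ G.attrStep S :=
  fun _ h => Or.inl (Or.inl h)

lemma attrStep_empty : G.attrStep ∅ = ∅ := by
  ext ℓ
  simp only [attrStep, Set.mem_union, Set.mem_ofPred_eq, Set.mem_empty_iff_false]
  grind

lemma attrLevel_succ (n : ℕ) : G.attrLevel (n + 1) = G.attrStep (G.attrLevel n) :=
  Function.iterate_succ_apply' _ _ _

lemma attrLevel_mono : Monotone G.attrLevel :=
  monotone_nat_of_le_succ fun n => attrLevel_succ n ▸ subset_attrStep _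

lemma mem_attractor_of_mem_attrLevel {ℓ : G.Loc} {n : ℕ} (h : ℓ ∈ G.attrLevel n) :
    ℓ ∈ G.attractor :=
  Set.mem_iUnion.2 ⟨n, h⟩

lemma mem_attractor_of_isFin {ℓ : G.Loc} (h : G.isFin ℓ) : ℓ ∈ G.attractor :=
  mem_attractor_of_mem_attrLevel (n := 0) h

lemma attrRank_le {ℓ : G.Loc} {n : ℕ} (h : ℓ ∈ G.attrLevel n) : G.attrRank ℓ ≤ n :=
  Nat.sInf_le h

lemma mem_attrLevel_attrRank {ℓ : G.Loc} (h : ℓ ∈ G.attractor) :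
    ℓ ∈ G.attrLevel (G.attrRank ℓ) :=
  Nat.sInf_mem (Set.mem_iUnion.1 h)

lemma attrRank_le_card_sub_one {ℓ : G.Loc} (h : ℓ ∈ G.attractor) :
    G.attrRank ℓ ≤ Fintype.card G.Loc - 1 := by
  have hfin : {ℓ | G.isFin ℓ}.Nonempty := by
    by_contra hempty
    obtain ⟨n, hn⟩ := Set.mem_iUnion.1 h
    rw [attrLevel, Set.not_nonempty_iff_eq_empty.1 hempty,
      Function.IsFixedPt.iterate attrStep_empty n] at hn
    exact hn
  apply attrRank_le
  rw [← Nat.card_eq_fintype_card]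
  exact Set.iterate_subset_iterate_natCard_sub_one subset_attrStep hfin _
    (mem_attrLevel_attrRank h)

lemma mem_attrStep_of_mem_attractor {ℓ : G.Loc} (ha : ℓ ∈ G.attractor) (hf : ¬G.isFin ℓ) :
    ∃ k, G.attrRank ℓ = k + 1 ∧ ℓ ∉ G.attrLevel k ∧ ℓ ∈ G.attrStep (G.attrLevel k) := by
  have hmem := mem_attrLevel_attrRank ha
  rcases hrk : G.attrRank ℓ with _ | k
  · rw [hrk] at hmem
    exact absurd hmem hf
  · refine ⟨k, rfl, fun hk => ?_, attrLevel_succ k ▸ hrk ▸ hmem⟩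
    have := attrRank_le hk
    omega

lemma exists_trans_of_mem_attractor {ℓ : G.Loc} (ha : ℓ ∈ G.attractor) (hf : ¬G.isFin ℓ) :
    ∃ ℓ', G.trans ℓ ℓ' := by
  obtain ⟨k, -, hk, (hmem | ⟨-, ℓ', htr, -⟩) | ⟨-, hex, -⟩⟩ :=
    mem_attrStep_of_mem_attractor ha hf
  exacts [absurd hmem hk, ⟨ℓ', htr⟩, hex]

lemma exists_trans_attrRank_lt {ℓ : G.Loc} (hm : G.isMin ℓ) (ha : ℓ ∈ G.attractor) :
    ∃ ℓ', G.trans ℓ ℓ' ∧ ℓ' ∈ G.attractor ∧ G.attrRank ℓ' < G.attrRank ℓ := by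
  obtain ⟨k, hrk, hk, (hmem | ⟨-, ℓ', htr, hℓ'⟩) | ⟨hM, -⟩⟩ :=
    mem_attrStep_of_mem_attractor ha (not_isFin_of_isMin hm)
  · exact absurd hmem hk
  · exact ⟨ℓ', htr, mem_attractor_of_mem_attrLevel hℓ', hrk ▸ Nat.lt_succ_of_le (attrRank_le hℓ')⟩
  · exact absurd hM (not_isMax_of_isMin hm)

lemma attrRank_lt_of_trans {ℓ ℓ' : G.Loc} (hM : G.isMax ℓ) (ha : ℓ ∈ G.attractor)
    (htr : G.trans ℓ ℓ') : ℓ' ∈ G.attractor ∧ G.attrRank ℓ' < G.attrRank ℓ := by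
  obtain ⟨k, hrk, hk, (hmem | ⟨hm, -⟩) | ⟨-, -, hall⟩⟩ :=
    mem_attrStep_of_mem_attractor ha (G.trans_not_fin _ _ htr)
  · exact absurd hmem hk
  · exact absurd hM (not_isMax_of_isMin hm)
  · exact ⟨mem_attractor_of_mem_attrLevel (hall ℓ' htr),
      hrk ▸ Nat.lt_succ_of_le (attrRank_le (hall ℓ' htr))⟩

lemma notMem_attractor_of_trans {ℓ ℓ' : G.Loc} (hm : G.isMin ℓ) (ha : ℓ ∉ G.attractor)
    (htr : G.trans ℓ ℓ') : ℓ' ∉ G.attractor := fun ha' => by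
  obtain ⟨n, hn⟩ := Set.mem_iUnion.1 ha'
  refine ha (mem_attractor_of_mem_attrLevel (n := n + 1) ?_)
  rw [attrLevel_succ]
  exact Or.inl (Or.inr ⟨hm, ℓ', htr, hn⟩)

lemma exists_trans_notMem_attractor {ℓ ℓ₀ : G.Loc} (hM : G.isMax ℓ) (ha : ℓ ∉ G.attractor)
    (htr : G.trans ℓ ℓ₀) : ∃ ℓ', G.trans ℓ ℓ' ∧ ℓ' ∉ G.attractor := by
  by_contra! hall
  -- every successor already lies in the level given by the largest rank
  refine ha (mem_attractor_of_mem_attrLevel (n := Finset.univ.sup G.attrRank + 1) ?_)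
  rw [attrLevel_succ]
  refine Or.inr ⟨hM, ⟨ℓ₀, htr⟩, fun ℓ' htr' => ?_⟩
  exact attrLevel_mono (Finset.le_sup (Finset.mem_univ ℓ')) (mem_attrLevel_attrRank (hall ℓ' htr'))

end Attractor

section Plays

lemma canMove_zero {c : G.Conf} {ℓ' : G.Loc} (hc : c.2 ≤ G.r) (htr : G.trans c.1 ℓ') :
    G.canMove c ⟨0, ℓ'⟩ :=
  ⟨le_rfl, by simpa using hc, htr, fun _ => rfl⟩

lemma exists_trans_of_not_deadlock {c : G.Conf} (hd : ¬G.deadlock c) : ∃ ℓ', G.trans c.1 ℓ' := by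
  obtain ⟨m, hm⟩ := not_not.1 hd
  exact ⟨m.tgt, hm.2.2.1⟩

lemma validConf_applyMove {s : G.Conf} {m : G.Move} (hv : G.validConf s)
    (hm : G.canMove s m) : G.validConf (G.applyMove s m) :=
  ⟨add_nonneg hv.1 hm.1, hm.2.1⟩

lemma validConf_endConf {s : G.Conf} {l : List G.Move} (hv : G.validConf s)
    (hl : G.ValidFrom s l) : G.validConf (G.endConf s l) := by
  induction l generalizing s with
  | nil => exact hv
  | cons m l ih => exact ih (validConf_applyMove hv hl.1) hl.2

lemma endConf_append (s : G.Conf) (l : List G.Move) (m : G.Move) :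
    G.endConf s (l ++ [m]) = G.applyMove (G.endConf s l) m :=
  List.foldl_concat _ _ _ _

lemma validFrom_append {s : G.Conf} {l : List G.Move} {m : G.Move}
    (hl : G.ValidFrom s l) (hm : G.canMove (G.endConf s l) m) : G.ValidFrom s (l ++ [m]) := by
  induction l generalizing s with
  | nil => exact ⟨hm, trivial⟩
  | cons a l ih => exact ⟨hl.1, ih hl.2 hm⟩

variable {σm : MinStrategy G} {σM : MaxStrategy G} {s : G.Conf}

lemma step_cases {l : List G.Move} (hv : G.validConf s) (hl : G.ValidFrom s l) :
    (G.step σm σM s l = l ∧ ∀ ℓ', ¬G.trans (G.endConf s l).1 ℓ') ∨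
    ∃ m, G.canMove (G.endConf s l) m ∧ G.step σm σM s l = l ++ [m] ∧
      (G.isMin (G.endConf s l).1 → σm.move s l = some m) ∧
      (G.isMax (G.endConf s l).1 → σM.move s l = some m) := by
  by_cases hd : G.deadlock (G.endConf s l)
  · refine Or.inl ⟨by simp [step, hd], fun ℓ' htr => hd ?_⟩
    exact ⟨⟨0, ℓ'⟩, canMove_zero (validConf_endConf hv hl).2 htr⟩
  obtain ⟨ℓ', htr⟩ := exists_trans_of_not_deadlock hd
  by_cases hm : G.isMin (G.endConf s l).1
  · obtain ⟨m, hmove, hcan⟩ := σm.legal s l hv hl hm hd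
    exact Or.inr ⟨m, hcan, by simp [step, hd, hm, hmove], fun _ => hmove,
      fun hM => absurd hM (not_isMax_of_isMin hm)⟩
  · have hM := (isMin_or_isMax_of_not_isFin (G.trans_not_fin _ _ htr)).resolve_left hm
    obtain ⟨m, hmove, hcan⟩ := σM.legal s l hv hl hM hd
    exact Or.inr ⟨m, hcan, by simp [step, hd, hm, hmove], fun h => absurd h hm, fun _ => hmove⟩

lemma hist_validFrom (hv : G.validConf s) (n : ℕ) : G.ValidFrom s (G.hist σm σM s n) := by
  induction n with
  | zero => trivial
  | succ n ih =>
    show G.ValidFrom s (G.step σm σM s (G.hist σm σM s n))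
    rcases step_cases (σm := σm) (σM := σM) hv ih with ⟨heq, -⟩ | ⟨m, hcan, heq, -⟩
    · rwa [heq]
    · rw [heq]
      exact validFrom_append ih hcan

lemma hist_succ_cases (hv : G.validConf s) (n : ℕ) :
    (G.hist σm σM s (n + 1) = G.hist σm σM s n ∧
      ∀ ℓ', ¬G.trans (G.endConf s (G.hist σm σM s n)).1 ℓ') ∨
    ∃ m, G.canMove (G.endConf s (G.hist σm σM s n)) m ∧
      G.hist σm σM s (n + 1) = G.hist σm σM s n ++ [m] ∧
      (G.isMin (G.endConf s (G.hist σm σM s n)).1 → σm.move s (G.hist σm σM s n) = some m) ∧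
      (G.isMax (G.endConf s (G.hist σm σM s n)).1 → σM.move s (G.hist σm σM s n) = some m) :=
  step_cases hv (hist_validFrom hv n)

lemma hist_length_le (hv : G.validConf s) (n : ℕ) : (G.hist σm σM s n).length ≤ n := by
  induction n with
  | zero => exact le_rfl
  | succ n ih =>
    rcases hist_succ_cases (σm := σm) (σM := σM) hv n with ⟨heq, -⟩ | ⟨m, -, heq, -⟩
    · rw [heq]; omega
    · rw [heq, List.length_append, List.length_singleton]; omega

end Plays

section PositionalStrategies

variable (G)

def prefSucc (P : G.Loc → G.Loc → Prop) (ℓ : G.Loc) : G.Loc :=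
  if h : ∃ ℓ', G.trans ℓ ℓ' ∧ P ℓ ℓ' then h.choose
  else if h : ∃ ℓ', G.trans ℓ ℓ' then h.choose else ℓ

variable {G}

lemma trans_prefSucc (P : G.Loc → G.Loc → Prop) {ℓ ℓ' : G.Loc} (htr : G.trans ℓ ℓ') :
    G.trans ℓ (G.prefSucc P ℓ) := by
  unfold prefSucc
  split_ifs with hP htr'
  exacts [hP.choose_spec.1, htr'.choose_spec, absurd ⟨ℓ', htr⟩ htr']

lemma prefSucc_spec {P : G.Loc → G.Loc → Prop} {ℓ : G.Loc} (h : ∃ ℓ', G.trans ℓ ℓ' ∧ P ℓ ℓ') :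
    P ℓ (G.prefSucc P ℓ) := by
  rw [prefSucc, dif_pos h]
  exact h.choose_spec.2

def MinStrategy.ofSucc (g : G.Loc → G.Loc) (hg : ∀ ℓ ℓ', G.trans ℓ ℓ' → G.trans ℓ (g ℓ)) :
    MinStrategy G where
  move s l := some ⟨0, g (G.endConf s l).1⟩
  legal _ _ hv hl _ hd :=
    ⟨_, rfl, canMove_zero (validConf_endConf hv hl).2
      (hg _ _ (exists_trans_of_not_deadlock hd).choose_spec)⟩

def MaxStrategy.ofSucc (g : G.Loc → G.Loc) (hg : ∀ ℓ ℓ', G.trans ℓ ℓ' → G.trans ℓ (g ℓ)) :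
    MaxStrategy G where
  move s l := some ⟨0, g (G.endConf s l).1⟩
  legal _ _ hv hl _ hd :=
    ⟨_, rfl, canMove_zero (validConf_endConf hv hl).2
      (hg _ _ (exists_trans_of_not_deadlock hd).choose_spec)⟩

variable (G)

def attractorStrategy : MinStrategy G :=
  MinStrategy.ofSucc (G.prefSucc fun ℓ ℓ' => ℓ' ∈ G.attractor ∧ G.attrRank ℓ' < G.attrRank ℓ)
    fun _ _ => trans_prefSucc _

def escapeStrategy : MaxStrategy G :=
  MaxStrategy.ofSucc (G.prefSucc fun _ ℓ' => ℓ' ∉ G.attractor) fun _ _ => trans_prefSucc _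

end PositionalStrategies

variable {s : G.Conf}

lemma notMem_attractor_escapeStrategy (σm : MinStrategy G) (hv : G.validConf s)
    (hs : s.1 ∉ G.attractor) (n : ℕ) :
    (G.endConf s (G.hist σm G.escapeStrategy s n)).1 ∉ G.attractor := by
  induction n with
  | zero => exact hs
  | succ n ih =>
    rcases hist_succ_cases hv n with ⟨heq, -⟩ | ⟨m, hcan, heq, -, hmax⟩
    · rwa [heq]
    rw [heq, endConf_append]
    have htr := hcan.2.2.1
    rcases isMin_or_isMax_of_not_isFin (G.trans_not_fin _ _ htr) with hm | hM
    · exact notMem_attractor_of_trans hm ih htr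
    · obtain rfl := Option.some.inj (hmax hM)
      exact prefSucc_spec (P := fun _ ℓ' => ℓ' ∉ G.attractor)
        (exists_trans_notMem_attractor hM ih htr)

theorem val_eq_top_of_notMem_attractor {ℓ : G.Loc} {ν : ℝ} (hv : G.validConf (ℓ, ν))
    (hℓ : ℓ ∉ G.attractor) : G.val ℓ ν = ⊤ := by
  refine iInf_eq_top.2 fun σm => top_le_iff.1 (le_iSup_of_le G.escapeStrategy ?_)
  rw [playCost, dif_neg]
  rintro ⟨n, hn⟩
  exact notMem_attractor_escapeStrategy σm hv hℓ n (mem_attractor_of_isFin hn)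

theorem exists_isFin_attractorStrategy (σM : MaxStrategy G) (hv : G.validConf s)
    (hs : s.1 ∈ G.attractor) :
    ∃ k ≤ G.attrRank s.1, G.isFin (G.endConf s (G.hist G.attractorStrategy σM s k)).1 := by
  set c := fun n => G.endConf s (G.hist G.attractorStrategy σM s n) with hc
  have hinv : ∀ n, (∃ k ≤ n, G.isFin (c k).1) ∨
      ((c n).1 ∈ G.attractor ∧ G.attrRank (c n).1 + n ≤ G.attrRank s.1) := by
    intro n
    induction n with
    | zero => exact Or.inr ⟨hs, le_rfl⟩
    | succ n ih =>
      rcases ih with ⟨k, hk, hf⟩ | ⟨ha, hrk⟩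
      · exact Or.inl ⟨k, by omega, hf⟩
      by_cases hf : G.isFin (c n).1
      · exact Or.inl ⟨n, by omega, hf⟩
      rcases hist_succ_cases hv n with ⟨-, hno⟩ | ⟨m, hcan, heq, hmin, -⟩
      · obtain ⟨ℓ', htr⟩ := exists_trans_of_mem_attractor ha hf
        exact absurd htr (hno ℓ')
      suffices m.tgt ∈ G.attractor ∧ G.attrRank m.tgt < G.attrRank (c n).1 by
        simp only [hc, heq, endConf_append]
        exact Or.inr ⟨this.1, by simp only [applyMove]; omega⟩
      rcases isMin_or_isMax_of_not_isFin hf with hm | hM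
      · obtain rfl := Option.some.inj (hmin hm)
        exact prefSucc_spec (P := fun ℓ ℓ' => ℓ' ∈ G.attractor ∧ G.attrRank ℓ' < G.attrRank ℓ)
          (exists_trans_attrRank_lt hm ha)
      · exact attrRank_lt_of_trans hM ha hcan.2.2.1
  rcases hinv (G.attrRank s.1) with h | ⟨ha, hrk⟩
  · exact h
  · refine ⟨G.attrRank s.1, le_rfl, by_contra fun hf => ?_⟩
    obtain ⟨k, hk, -⟩ := mem_attrStep_of_mem_attractor ha hf
    omega

section Prices

lemma transWt_le_wT {ℓ ℓ' : G.Loc} (h : G.trans ℓ ℓ') : (G.transWt ℓ ℓ' : ℝ) ≤ G.wT :=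
  le_ciSup_of_le (Finite.bddAbove_range _) (ℓ, ℓ') (by rw [if_pos h]; exact le_abs_self _)

lemma wT_nonneg [Nonempty G.Loc] : 0 ≤ G.wT :=
  le_ciSup_of_le (Finite.bddAbove_range _) (Classical.arbitrary _) (by split_ifs <;> positivity)

lemma finalCost_le_max {ℓ : G.Loc} {x : ℝ} (h0 : 0 ≤ x) (hr : x ≤ G.r) :
    G.finalCost ℓ x ≤ max (G.finalCost ℓ 0) (G.finalCost ℓ G.r) := by
  unfold finalCost
  rcases le_total 0 (G.finSlope ℓ) with hs | hs
  · exact le_max_of_le_right (by nlinarith)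
  · exact le_max_of_le_left (by nlinarith)

lemma finalCost_le_wF {ℓ : G.Loc} {x : ℝ} (hf : G.isFin ℓ) (h0 : 0 ≤ x) (hr : x ≤ G.r) :
    G.finalCost ℓ x ≤ G.wF :=
  le_ciSup_of_le (Finite.bddAbove_range _) ℓ <| by
    rw [if_pos hf]
    exact (finalCost_le_max h0 hr).trans (max_le_max (le_abs_self _) (le_abs_self _))

variable (hurg : ∀ ℓ : G.Loc, ¬G.isFin ℓ → G.isUrg ℓ)
include hurg

lemma finPrice_le {l : List G.Move} {s : G.Conf} (hv : G.validConf s) (hl : G.ValidFrom s l)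
    (hf : G.isFin (G.endConf s l).1) : G.finPrice s l ≤ l.length * G.wT + G.wF := by
  induction l generalizing s with
  | nil =>
    replace hf : G.isFin s.1 := hf
    rw [finPrice, if_pos hf, List.length_nil, Nat.cast_zero, zero_mul, zero_add]
    exact finalCost_le_wF hf hv.1 hv.2
  | cons m l ih =>
    have htr := hl.1.2.2.1
    have hdelay : m.t = 0 := hl.1.2.2.2 (hurg _ (G.trans_not_fin _ _ htr))
    have hstep : G.moveCost s m ≤ G.wT := by
      rw [moveCost, hdelay, zero_mul, add_zero]
      exact transWt_le_wT htr
    have := ih (validConf_applyMove hv hl.1) hl.2 hf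
    rw [finPrice, List.length_cons, Nat.cast_succ]
    linarith

lemma playCostBdd_le {i : ℕ} {s : G.Conf} {σm : MinStrategy G} {σM : MaxStrategy G}
    (hv : G.validConf s) (h : ∃ k ≤ i, G.isFin (G.endConf s (G.hist σm σM s k)).1) :
    G.playCostBdd i s σm σM ≤ ((i * G.wT + G.wF : ℝ) : EReal) := by
  have : Nonempty G.Loc := ⟨s.1⟩
  rw [playCostBdd, dif_pos h, EReal.coe_le_coe_iff]
  obtain ⟨hk, hf⟩ := Nat.find_spec h
  have hlen : ((G.hist σm σM s (Nat.find h)).length : ℝ) ≤ i := by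
    exact_mod_cast (hist_length_le hv _).trans hk
  calc G.finPrice s (G.hist σm σM s (Nat.find h))
      ≤ (G.hist σm σM s (Nat.find h)).length * G.wT + G.wF :=
        finPrice_le hurg hv (hist_validFrom hv _) hf
    _ ≤ i * G.wT + G.wF := by gcongr; exact wT_nonneg

end Prices

end SPTG

open SPTG in
theorem urgent_bounded_value_bound_general (G : SPTG) (hurg : ∀ ℓ : G.Loc, ¬G.isFin ℓ → G.isUrg ℓ)
    (ν : ℝ) (hν0 : 0 ≤ ν) (hνr : ν ≤ G.r) (ℓ : G.Loc)
    (hfin : G.val ℓ ν ≠ ⊤) :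
    G.boundedVal (Fintype.card G.Loc - 1) ν ℓ ≤
      ((((Fintype.card G.Loc : ℝ) - 1) * G.wT + G.wF : ℝ) : EReal) := by
  have hv : G.validConf (ℓ, ν) := ⟨hν0, hνr⟩
  have hatt : ℓ ∈ G.attractor := by_contra fun h => hfin (val_eq_top_of_notMem_attractor hv h)
  have hcard : ((Fintype.card G.Loc - 1 : ℕ) : ℝ) = (Fintype.card G.Loc : ℝ) - 1 := by
    rw [Nat.cast_sub (Fintype.card_pos_iff.2 ⟨ℓ⟩), Nat.cast_one]
  rw [← hcard]
  refine iInf_le_of_le G.attractorStrategy (iSup_le fun σM => playCostBdd_le hurg hv ?_)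
  obtain ⟨k, hk, hf⟩ := exists_isFin_attractorStrategy σM hv hatt
  exact ⟨k, hk.trans (attrRank_le_card_sub_one hatt), hf⟩

open SPTG in
/-- **Lemma: bound on the `(|L|-1)`-step value.** In an `r`-SPTG with
only urgent (non-final) locations, if `Val_G(ℓ,ν) < +∞` then
`V^{|L|-1}_ν(ℓ) ≤ (|L|-1)·w_T + w_F`. -/
theorem urgent_bounded_value_bound (G : SPTG) (hq : ∃ q : ℚ, G.r = (q : ℝ))
    (hrat : G.ratFinal) (hurg : ∀ ℓ : G.Loc, ¬G.isFin ℓ → G.isUrg ℓ)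
    (ν : ℝ) (hν0 : 0 ≤ ν) (hνr : ν ≤ G.r) (ℓ : G.Loc)
    (hfin : G.val ℓ ν ≠ ⊤) :
    G.boundedVal (Fintype.card G.Loc - 1) ν ℓ ≤
      ((((Fintype.card G.Loc : ℝ) - 1) * G.wT + G.wF : ℝ) : EReal) :=
  urgent_bounded_value_bound_general G hurg ν hν0 hνr ℓ hfin
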